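/- Let α_n be the effective resistance across the first rung of the ladder graph P_2 □ P_n. For n ≥ 2 and i ∈ {1,2}, the effective resistance across the (i,1)-th rail of P_2 □ P_n (i.e., between (i,1) and (i,2)) equals α_n. -/

import Mathlib

open Classical Matrix

/-- The four Penrose conditions characterizing the Moore–Penrose pseudoinverse
of a real square matrix. -/
def IsMoorePenroseInverse {V : Type*} [Fintype V] [DecidableEq V]
    (L P : Matrix V V ℝ) : Prop :=
  L * P * L = L ∧ P * L * P = P ∧ (L * P)ᵀ = L * P ∧ (P * L)ᵀ = P * L

/-- The Moore–Penrose pseudoinverse of a real square matrix. -/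
noncomputable def pinv {V : Type*} [Fintype V] [DecidableEq V]
    (L : Matrix V V ℝ) : Matrix V V ℝ :=
  if h : ∃ P, IsMoorePenroseInverse L P then h.choose else 0

/-- Effective resistance between `x` and `y` computed from a (weighted) Laplacian `L`. -/
noncomputable def effResM {V : Type*} [Fintype V] [DecidableEq V]
    (L : Matrix V V ℝ) (x y : V) : ℝ :=
  pinv L x x + pinv L y y - 2 * pinv L x y

/-- Effective resistance between vertices `x` and `y` of a simple graph `G`. -/
noncomputable def effRes {V : Type*} [Fintype V] [DecidableEq V]
    (G : SimpleGraph V) (x y : V) : ℝ :=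
  effResM (G.lapMatrix ℝ) x y

/-- The node resistance curvature `p_x = 1 - (1/2) ∑_{y ~ x} ω_{x,y}`. -/
noncomputable def curv {V : Type*} [Fintype V] [DecidableEq V]
    (G : SimpleGraph V) (x : V) : ℝ :=
  1 - (1/2) * ∑ y : V, if G.Adj x y then effRes G x y else 0

/-- The grid graph `P_m □ P_n` (vertex `(i,j)` of the paper corresponds to
`(⟨i-1⟩, ⟨j-1⟩) : Fin m × Fin n`). -/
def grid (m n : ℕ) : SimpleGraph (Fin m × Fin n) :=
  (SimpleGraph.pathGraph m).boxProd (SimpleGraph.pathGraph n)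

/-- The ladder graph `P_2 □ P_n` (vertex `(i,k)` of the paper corresponds to
`(⟨i-1⟩, ⟨k-1⟩) : Fin 2 × Fin n`). -/
def ladder (n : ℕ) : SimpleGraph (Fin 2 × Fin n) :=
  (SimpleGraph.pathGraph 2).boxProd (SimpleGraph.pathGraph n)

/-- `α_n`, the effective resistance across the first rung of the ladder `P_2 □ P_n`,
i.e. between the vertices `(1,1)` and `(2,1)` of the paper (junk value `0` for `n = 0`). -/
noncomputable def alpha (n : ℕ) : ℝ :=
  if h : 0 < n then effRes (ladder n) (0, ⟨0, h⟩) (1, ⟨0, h⟩) else 0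

/-!
For a connected graph the Laplacian `L` has kernel the constants, so `L⁺ = (L + J/N)⁻¹ - J/N`
and `L L⁺ = I - J/N`; in particular row `v` of `L L⁺` is constant off the diagonal. If `v` has
exactly two neighbours `u` and `w`, that row reads `2 L⁺ v y - L⁺ u y - L⁺ w y`, and comparing
the columns `y = u` and `y = w` gives `2 L⁺ v u - L⁺ u u = 2 L⁺ v w - L⁺ w w`, i.e.
`ω v u = ω v w`. The corner `(i, 1)` of the ladder has exactly the two neighbours `(i, 2)` and
its rung partner, so the first rail has the resistance of the first rung.
-/

namespace IsMoorePenroseInverse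

variable {V : Type*} [Fintype V] [DecidableEq V] {L P Q : Matrix V V ℝ}

theorem unique (hP : IsMoorePenroseInverse L P) (hQ : IsMoorePenroseInverse L Q) : P = Q := by
  obtain ⟨hP₁, hP₂, hP₃, hP₄⟩ := hP
  obtain ⟨hQ₁, hQ₂, hQ₃, hQ₄⟩ := hQ
  have hLP : L * P = L * Q := by
    calc L * P = (L * Q * L) * P := by rw [hQ₁]
    _ = (L * Q)ᵀ * (L * P)ᵀ := by rw [hQ₃, hP₃, Matrix.mul_assoc]
    _ = (L * P * L * Q)ᵀ := by simp only [Matrix.transpose_mul, Matrix.mul_assoc]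
    _ = L * Q := by rw [hP₁, hQ₃]
  have hPL : P * L = Q * L := by
    calc P * L = P * (L * Q * L) := by rw [hQ₁]
    _ = (P * L)ᵀ * (Q * L)ᵀ := by rw [hP₄, hQ₄, Matrix.mul_assoc, Matrix.mul_assoc]
    _ = (Q * (L * P * L))ᵀ := by simp only [Matrix.transpose_mul, Matrix.mul_assoc]
    _ = Q * L := by rw [hP₁, hQ₄]
  calc P = P * L * P := hP₂.symm
  _ = Q * L * Q := by rw [hPL, Matrix.mul_assoc, hLP, ← Matrix.mul_assoc]
  _ = Q := hQ₂

theorem transpose (hP : IsMoorePenroseInverse L P) : IsMoorePenroseInverse Lᵀ Pᵀ := by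
  obtain ⟨h₁, h₂, h₃, h₄⟩ := hP
  refine ⟨?_, ?_, ?_, ?_⟩
  · simpa only [Matrix.transpose_mul, Matrix.mul_assoc] using congrArg Matrix.transpose h₁
  · simpa only [Matrix.transpose_mul, Matrix.mul_assoc] using congrArg Matrix.transpose h₂
  · rw [← Matrix.transpose_mul, Matrix.transpose_transpose, h₄]
  · rw [← Matrix.transpose_mul, Matrix.transpose_transpose, h₃]

end IsMoorePenroseInverse

section Pinv

variable {V : Type*} [Fintype V] [DecidableEq V] {L P : Matrix V V ℝ}

theorem pinv_eq_of_isMoorePenroseInverse (h : IsMoorePenroseInverse L P) : pinv L = P := by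
  have hex : ∃ P, IsMoorePenroseInverse L P := ⟨P, h⟩
  rw [pinv, dif_pos hex]
  exact hex.choose_spec.unique h

theorem transpose_pinv_of_transpose_eq (hL : Lᵀ = L) : (pinv L)ᵀ = pinv L := by
  by_cases hex : ∃ P, IsMoorePenroseInverse L P
  · obtain ⟨P, hP⟩ := hex
    have hPt := pinv_eq_of_isMoorePenroseInverse hP.transpose
    rw [hL] at hPt
    rw [pinv_eq_of_isMoorePenroseInverse hP] at hPt ⊢
    exact hPt.symm
  · unfold pinv
    rw [dif_neg hex, Matrix.transpose_zero]

end Pinv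

section Projection

variable {V : Type*} [Fintype V] [DecidableEq V] {L E : Matrix V V ℝ}

theorem isUnit_det_add_of_mulVec_eq_zero (hEE : E * E = E) (hEL : E * L = 0)
    (hker : ∀ w, L *ᵥ w = 0 → E *ᵥ w = w) : IsUnit (L + E).det := by
  refine isUnit_iff_ne_zero.mpr fun hdet => ?_
  obtain ⟨w, hw0, hw⟩ := Matrix.exists_mulVec_eq_zero_iff.mpr hdet
  have hEw : E *ᵥ w = 0 := by
    simpa [Matrix.mulVec_mulVec, Matrix.mul_add, hEL, hEE] using congrArg (E *ᵥ ·) hw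
  have hLw : L *ᵥ w = 0 := by simpa [Matrix.add_mulVec, hEw] using hw
  exact hw0 (by rw [← hker w hLw, hEw])

theorem isMoorePenroseInverse_inv_add_sub (hEE : E * E = E) (hEt : Eᵀ = E)
    (hLE : L * E = 0) (hEL : E * L = 0) (hker : ∀ w, L *ᵥ w = 0 → E *ᵥ w = w) :
    IsMoorePenroseInverse L ((L + E)⁻¹ - E) ∧ L * ((L + E)⁻¹ - E) = 1 - E := by
  have hdet := isUnit_det_add_of_mulVec_eq_zero hEE hEL hker
  have hEB : E * (L + E)⁻¹ = E := by
    calc E * (L + E)⁻¹ = E * (L + E) * (L + E)⁻¹ := by rw [Matrix.mul_add, hEL, hEE, zero_add]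
    _ = E := by rw [Matrix.mul_assoc, Matrix.mul_nonsing_inv _ hdet, Matrix.mul_one]
  have hBE : (L + E)⁻¹ * E = E := by
    calc (L + E)⁻¹ * E = (L + E)⁻¹ * ((L + E) * E) := by rw [Matrix.add_mul, hLE, hEE, zero_add]
    _ = E := by rw [← Matrix.mul_assoc, Matrix.nonsing_inv_mul _ hdet, Matrix.one_mul]
  have hLP : L * ((L + E)⁻¹ - E) = 1 - E := by
    calc L * ((L + E)⁻¹ - E) = (L + E - E) * (L + E)⁻¹ := by
          rw [Matrix.mul_sub, hLE, sub_zero, add_sub_cancel_right]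
    _ = 1 - E := by rw [Matrix.sub_mul, Matrix.mul_nonsing_inv _ hdet, hEB]
  have hPL : ((L + E)⁻¹ - E) * L = 1 - E := by
    calc ((L + E)⁻¹ - E) * L = (L + E)⁻¹ * (L + E - E) := by
          rw [Matrix.sub_mul, hEL, sub_zero, add_sub_cancel_right]
    _ = 1 - E := by rw [Matrix.mul_sub, Matrix.nonsing_inv_mul _ hdet, hBE]
  have hEP : E * ((L + E)⁻¹ - E) = 0 := by rw [Matrix.mul_sub, hEB, hEE, sub_self]
  have hsymm : (1 - E)ᵀ = 1 - E := by rw [Matrix.transpose_sub, Matrix.transpose_one, hEt]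
  refine ⟨⟨?_, ?_, ?_, ?_⟩, hLP⟩
  · rw [hLP, Matrix.sub_mul, Matrix.one_mul, hEL, sub_zero]
  · rw [hPL, Matrix.sub_mul, Matrix.one_mul, hEP, sub_zero]
  · rw [hLP, hsymm]
  · rw [hPL, hsymm]

end Projection

section MeanProj

variable {V : Type*} [Fintype V]

noncomputable def meanProj (V : Type*) [Fintype V] : Matrix V V ℝ :=
  Matrix.of fun _ _ => (Fintype.card V : ℝ)⁻¹

theorem meanProj_mul_self [Nonempty V] : meanProj V * meanProj V = meanProj V := by
  ext x y
  simp [meanProj, Matrix.mul_apply]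

theorem transpose_meanProj : (meanProj V)ᵀ = meanProj V := rfl

theorem meanProj_mulVec_const [Nonempty V] (a : ℝ) :
    meanProj V *ᵥ (fun _ => a) = fun _ => a := by
  ext x
  simp [meanProj, Matrix.mulVec, dotProduct]

variable [DecidableEq V] (G : SimpleGraph V)

theorem lapMatrix_mul_meanProj : G.lapMatrix ℝ * meanProj V = 0 := by
  ext x y
  have h := congrFun (G.lapMatrix_mulVec_const_eq_zero (R := ℝ)) x
  simp only [Matrix.mulVec, dotProduct, mul_one, Pi.zero_apply] at h
  simp [meanProj, Matrix.mul_apply, ← Finset.sum_mul, h]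

theorem meanProj_mul_lapMatrix : meanProj V * G.lapMatrix ℝ = 0 := by
  rw [← transpose_meanProj, ← G.isSymm_lapMatrix ℝ, ← Matrix.transpose_mul,
    lapMatrix_mul_meanProj, Matrix.transpose_zero]

end MeanProj

namespace SimpleGraph

variable {V : Type*} [Fintype V] [DecidableEq V] {G : SimpleGraph V}

theorem Connected.meanProj_mulVec_of_lapMatrix_mulVec_eq_zero (hG : G.Connected) {w : V → ℝ}
    (hw : G.lapMatrix ℝ *ᵥ w = 0) : meanProj V *ᵥ w = w := by
  obtain ⟨x₀⟩ := hG.nonempty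
  have : Nonempty V := ⟨x₀⟩
  have hconst : w = fun _ => w x₀ :=
    funext fun x => G.lapMatrix_mulVec_eq_zero_iff_forall_reachable.mp hw x x₀ (hG.preconnected x x₀)
  rw [hconst, meanProj_mulVec_const]

theorem Connected.lapMatrix_mul_pinv (hG : G.Connected) :
    G.lapMatrix ℝ * pinv (G.lapMatrix ℝ) = 1 - meanProj V := by
  have : Nonempty V := hG.nonempty
  obtain ⟨hMP, hLP⟩ := isMoorePenroseInverse_inv_add_sub meanProj_mul_self transpose_meanProj
    (lapMatrix_mul_meanProj G) (meanProj_mul_lapMatrix G)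
    fun _ => hG.meanProj_mulVec_of_lapMatrix_mulVec_eq_zero
  rwa [pinv_eq_of_isMoorePenroseInverse hMP]

theorem lapMatrix_mul_apply_of_forall_adj_iff {v u w : V} (huw : u ≠ w)
    (hv : ∀ z, G.Adj v z ↔ z = u ∨ z = w) (M : Matrix V V ℝ) (y : V) :
    (G.lapMatrix ℝ * M) v y = 2 * M v y - (M u y + M w y) := by
  have hnbr : G.neighborFinset v = {u, w} := by
    ext z
    simp [hv]
  calc (G.lapMatrix ℝ * M) v y = (G.lapMatrix ℝ *ᵥ fun z => M z y) v := rfl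
  _ = 2 * M v y - (M u y + M w y) := by
    rw [lapMatrix_mulVec_apply, ← card_neighborFinset_eq_degree, hnbr, Finset.card_pair huw,
      Finset.sum_pair huw, Nat.cast_ofNat]

theorem effRes_comm (x y : V) : effRes G x y = effRes G y x := by
  have h := congrFun (congrFun (transpose_pinv_of_transpose_eq (G.isSymm_lapMatrix ℝ)) x) y
  simp only [Matrix.transpose_apply] at h
  simp only [effRes, effResM, h]
  ring

theorem Connected.effRes_eq_of_forall_adj_iff (hG : G.Connected) {v u w : V} (huw : u ≠ w)
    (hv : ∀ z, G.Adj v z ↔ z = u ∨ z = w) : effRes G v u = effRes G v w := by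
  set g := pinv (G.lapMatrix ℝ)
  have hrow : ∀ y, v ≠ y → 2 * g v y - (g u y + g w y) = -(Fintype.card V : ℝ)⁻¹ := by
    intro y hy
    rw [← lapMatrix_mul_apply_of_forall_adj_iff huw hv, hG.lapMatrix_mul_pinv]
    simp [meanProj, Matrix.one_apply_ne hy]
  have hgt := congrFun (congrFun (transpose_pinv_of_transpose_eq (G.isSymm_lapMatrix ℝ)) u) w
  have hu := hrow u (G.ne_of_adj ((hv u).mpr (Or.inl rfl)))
  have hw := hrow w (G.ne_of_adj ((hv w).mpr (Or.inr rfl)))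
  simp only [Matrix.transpose_apply] at hgt
  simp only [effRes, effResM]
  linarith

end SimpleGraph

section Ladder

theorem ladder_connected {n : ℕ} (hn : 0 < n) : (ladder n).Connected := by
  obtain ⟨m, rfl⟩ : ∃ m, n = m + 1 := ⟨n - 1, by omega⟩
  exact SimpleGraph.connected_boxProd.mpr
    ⟨SimpleGraph.pathGraph_connected 1, SimpleGraph.pathGraph_connected m⟩

theorem ladder_adj_corner_iff {n : ℕ} (hn : 1 < n) (i : Fin 2) (z : Fin 2 × Fin n) :
    (ladder n).Adj (i, ⟨0, Nat.zero_lt_of_lt hn⟩) z ↔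
      z = (i + 1, ⟨0, Nat.zero_lt_of_lt hn⟩) ∨ z = (i, ⟨1, hn⟩) := by
  obtain ⟨j, k⟩ := z
  fin_cases i <;> fin_cases j <;>
    simp [ladder, SimpleGraph.pathGraph_adj, Fin.ext_iff] <;> omega

theorem effRes_ladder_rung {n : ℕ} (hn : 0 < n) (i : Fin 2) :
    effRes (ladder n) (i, ⟨0, hn⟩) (i + 1, ⟨0, hn⟩) = alpha n := by
  rw [alpha, dif_pos hn]
  fin_cases i
  · rfl
  · exact SimpleGraph.effRes_comm _ _

end Ladder

theorem first_rail_effres (n : ℕ) (hn : 2 ≤ n) (i : Fin 2) :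
    effRes (ladder n) (i, ⟨0, by omega⟩) (i, ⟨1, by omega⟩) = alpha n := by
  have hrung_ne_rail : ((i + 1, ⟨0, by omega⟩) : Fin 2 × Fin n) ≠ (i, ⟨1, hn⟩) := by
    simp [Fin.ext_iff]
  rw [← (ladder_connected (by omega)).effRes_eq_of_forall_adj_iff hrung_ne_rail
    (ladder_adj_corner_iff hn i), effRes_ladder_rung]
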